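/- Let G be the graph on the Cantor space 2^ω relating distinct points x, y if and only if the set {n ∈ ω : x(n) ≠ y(n)} is finite. Then κ(G) ≤ 𝔟: the least cardinality of a subset of 2^ω that is not contained in the union of countably many compact G-anticliques is at most 𝔟, the least cardinality of a subset of the Baire space ω^ω that is not contained in the union of countably many compact subsets of ω^ω. -/
import Mathlib


open Set

/-- A `G`-anticlique: no two distinct points of `A` are `G`-related. -/
def Anticlique {X : Type*} (G : X → X → Prop) (A : Set X) : Prop :=
  ∀ x ∈ A, ∀ y ∈ A, x ≠ y → ¬ G x y

/-- The graph on `2^ω` relating distinct sequences that differ in only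
finitely many entries. -/
def finDiffGraph (x y : ℕ → Bool) : Prop :=
  x ≠ y ∧ {n : ℕ | x n ≠ y n}.Finite

/-- `κ(G)`: the least cardinality of a subset of `2^ω` not covered by
countably many compact `G`-anticliques. -/
noncomputable def kappa (G : (ℕ → Bool) → (ℕ → Bool) → Prop) : Cardinal :=
  sInf {c : Cardinal | ∃ S : Set (ℕ → Bool), Cardinal.mk S = c ∧
    ¬ ∃ K : ℕ → Set (ℕ → Bool),
      (∀ n, IsCompact (K n) ∧ Anticlique G (K n)) ∧ S ⊆ ⋃ n, K n}

/-- `𝔟`: the least cardinality of a subset of the Baire space not covered by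
countably many compact subsets of the Baire space. -/
noncomputable def frakB : Cardinal :=
  sInf {c : Cardinal | ∃ S : Set (ℕ → ℕ), Cardinal.mk S = c ∧
    ¬ ∃ K : ℕ → Set (ℕ → ℕ), (∀ n, IsCompact (K n)) ∧ S ⊆ ⋃ n, K n}


/-- position of the `m`-th `false` in the code of `f` -/
def gpos (f : ℕ → ℕ) (m : ℕ) : ℕ := (∑ i ∈ Finset.range m, (f i + 1)) + f m

/-- the coding map `ω^ω → 2^ω` -/
def hmap (f : ℕ → ℕ) (n : ℕ) : Bool := decide (∀ m < n + 1, gpos f m ≠ n)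

lemma gpos_strictMono (f : ℕ → ℕ) : StrictMono (gpos f) := by
  apply strictMono_nat_of_lt_succ
  intro n
  simp only [gpos, Finset.sum_range_succ]
  omega

lemma le_gpos (f : ℕ → ℕ) (m : ℕ) : m ≤ gpos f m := by
  have : m ≤ ∑ i ∈ Finset.range m, (f i + 1) := by
    calc m = ∑ _i ∈ Finset.range m, 1 := by simp
    _ ≤ _ := Finset.sum_le_sum (fun i _ => by omega)
  simp only [gpos]; omega

lemma self_le_gpos (f : ℕ → ℕ) (m : ℕ) : f m ≤ gpos f m := Nat.le_add_left _ _

lemma hmap_eq_false (f : ℕ → ℕ) (n : ℕ) : hmap f n = false ↔ ∃ m, gpos f m = n := by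
  simp only [hmap, decide_eq_false_iff_not]
  push_neg
  constructor
  · rintro ⟨m, _, hm⟩; exact ⟨m, hm⟩
  · rintro ⟨m, hm⟩
    exact ⟨m, by have := le_gpos f m; omega, hm⟩

lemma hmap_false_infinite (f : ℕ → ℕ) : {i | hmap f i = false}.Infinite := by
  apply Set.infinite_of_injective_forall_mem (f := gpos f) (gpos_strictMono f).injective
  exact fun m => (hmap_eq_false f _).mpr ⟨m, rfl⟩

lemma gpos_congr {f f' : ℕ → ℕ} {m : ℕ} (h : ∀ i ≤ m, f i = f' i) :
    gpos f m = gpos f' m := by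
  simp only [gpos]
  rw [h m le_rfl, Finset.sum_congr rfl]
  intro i hi
  rw [h i (le_of_lt (Finset.mem_range.mp hi))]

lemma hmap_continuous : Continuous (fun f => hmap f : (ℕ → ℕ) → (ℕ → Bool)) := by
  apply continuous_pi
  intro n
  have key : (fun f => hmap f n) =
      (fun v : Fin (n+1) → ℕ =>
        hmap (fun i => if h : i < n + 1 then v ⟨i, h⟩ else 0) n) ∘
      (fun f (i : Fin (n+1)) => f i) := by
    funext f
    simp only [Function.comp_apply, hmap]
    congr 1
    apply propext
    apply forall_congr'
    intro m
    apply imp_congr_right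
    intro hm
    rw [gpos_congr (f := fun i => if h : i < n + 1 then f i else 0) (f' := f)
      (fun i hi => by simp [show i < n + 1 by omega])]
  rw [key]
  exact Continuous.comp continuous_of_discreteTopology (continuous_pi fun i => continuous_apply _)

lemma hmap_injective : Function.Injective (fun f => hmap f : (ℕ → ℕ) → (ℕ → Bool)) := by
  intro f f' h
  have hg : gpos f = gpos f' := by
    apply ((gpos_strictMono f).range_inj (gpos_strictMono f')).mp
    have : ∀ g : ℕ → ℕ, Set.range (gpos g) = {i | hmap g i = false} := by
      intro g
      ext i
      simp [hmap_eq_false, Set.range]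
    rw [this, this]
    simp only at h
    rw [h]
  funext m
  induction m using Nat.strong_induction_on with
  | _ m ih =>
    have h1 : gpos f m = gpos f' m := congrFun hg m
    have h2 : (∑ i ∈ Finset.range m, (f i + 1)) = ∑ i ∈ Finset.range m, (f' i + 1) := by
      apply Finset.sum_congr rfl
      intro i hi
      rw [ih i (Finset.mem_range.mp hi)]
    simp only [gpos] at h1
    omega

lemma preimage_compact {C : Set (ℕ → Bool)} (hC : IsCompact C)
    (hinf : ∀ x ∈ C, {i | x i = false}.Infinite) :
    IsCompact ((fun f => hmap f) ⁻¹' C) := by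
  have bound : ∀ m : ℕ, ∃ N : ℕ, ∀ f, hmap f ∈ C → f m < N := by
    intro m
    set U : ℕ → Set (ℕ → Bool) := fun j =>
      ⋃ s ∈ {s : Finset ℕ | s.card = m + 1}, {x | ∀ i ∈ s, i < j ∧ x i = false} with hU
    have hUopen : ∀ j, IsOpen (U j) := by
      intro j
      apply isOpen_biUnion
      intro s _
      have : {x : ℕ → Bool | ∀ i ∈ s, i < j ∧ x i = false} =
          ⋂ i ∈ s, {x : ℕ → Bool | i < j ∧ x i = false} := by
        ext x; simp
      rw [this]
      apply isOpen_biInter_finset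
      intro i _
      by_cases hij : i < j
      · have : {x : ℕ → Bool | i < j ∧ x i = false} = (fun x : ℕ → Bool => x i) ⁻¹' {false} := by
          ext x; simp [hij]
        rw [this]
        exact (isOpen_discrete _).preimage (continuous_apply i)
      · have : {x : ℕ → Bool | i < j ∧ x i = false} = ∅ := by
          ext x; simp [hij]
        rw [this]; exact isOpen_empty
    have hcover : C ⊆ ⋃ j, U j := by
      intro x hx
      obtain ⟨s, hs_sub, hs_card⟩ := (hinf x hx).exists_subset_card_eq (m + 1)
      rcases s.eq_empty_or_nonempty with rfl | hne
      · simp at hs_card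
      · refine mem_iUnion.mpr ⟨s.max' hne + 1, ?_⟩
        refine mem_biUnion hs_card ?_
        intro i hi
        exact ⟨Nat.lt_succ_of_le (s.le_max' i hi), hs_sub hi⟩
    obtain ⟨t, ht⟩ := hC.elim_finite_subcover U hUopen hcover
    refine ⟨t.sup id + 1, ?_⟩
    intro f hf
    have hfU : hmap f ∈ U (t.sup id + 1) := by
      obtain ⟨j, hjt, hj⟩ := by
        simpa using ht hf
      obtain ⟨s, hscard, hs⟩ := by simpa [hU] using hj
      refine mem_biUnion (show s ∈ {s : Finset ℕ | s.card = m+1} from hscard) ?_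
      intro i hi
      have := hs i hi
      have : j ≤ t.sup id := Finset.le_sup (f := id) hjt
      exact ⟨by omega, (hs i hi).2⟩
    obtain ⟨s, hscard, hs⟩ := by simpa [hU] using hfU
    -- find i ∈ s with gpos f m ≤ i
    have : ∃ i ∈ s, gpos f m ≤ i := by
      by_contra hcon
      push_neg at hcon
      have hsub : s ⊆ (Finset.range m).image (gpos f) := by
        intro i hi
        obtain ⟨k, hk⟩ := (hmap_eq_false f i).mp (hs i hi).2
        have hkm : k < m := by
          by_contra hkm
          have := (gpos_strictMono f).monotone (not_lt.mp hkm)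
          have := hcon i hi
          omega
        exact Finset.mem_image.mpr ⟨k, Finset.mem_range.mpr hkm, hk⟩
      have := Finset.card_le_card hsub
      have := Finset.card_image_le (s := Finset.range m) (f := gpos f)
      simp [hscard, Finset.card_range] at *
      omega
    obtain ⟨i, hi, hgi⟩ := this
    have h1 := self_le_gpos f m
    have h2 := (hs i hi).1
    omega
  choose N hN using bound
  apply IsCompact.of_isClosed_subset
    (isCompact_univ_pi (fun m => (Set.finite_Iic (N m)).isCompact))
    (hC.isClosed.preimage hmap_continuous)
  intro f hf
  refine Set.mem_univ_pi.mpr fun m => ?_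
  exact Set.mem_Iic.mpr (le_of_lt (hN m f hf))

lemma sigma_cover {K : Set (ℕ → Bool)} (hK : IsCompact K)
    (hA : Anticlique finDiffGraph K) :
    ∃ D : ℕ → Set (ℕ → ℕ), (∀ j, IsCompact (D j)) ∧
      (fun f => hmap f) ⁻¹' K ⊆ ⋃ j, D j := by
  set P : Set (ℕ → Bool) := {x ∈ K | {i | x i = false}.Finite} with hPdef
  have hPsub : P.Subsingleton := by
    intro x hx y hy
    by_contra hne
    refine hA x hx.1 y hy.1 hne ⟨hne, ?_⟩
    apply Set.Finite.subset (hx.2.union hy.2)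
    intro n hn
    simp only [mem_setOf_eq, mem_union]
    rcases hb : x n with _ | _ <;> rcases hb' : y n with _ | _ <;>
      simp_all
  rcases P.eq_empty_or_nonempty with hP | ⟨p, hp⟩
  · refine ⟨fun _ => (fun f => hmap f) ⁻¹' K, fun _ => ?_, fun f hf => mem_iUnion.mpr ⟨0, hf⟩⟩
    apply preimage_compact hK
    intro x hx
    by_contra hninf
    rw [Set.not_infinite] at hninf
    exact absurd (show x ∈ P from ⟨hx, hninf⟩) (by simp [hP])
  · refine ⟨fun j => (fun f => hmap f) ⁻¹' (K ∩ {x | x j ≠ p j}), fun j => ?_, ?_⟩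
    · apply preimage_compact
      · apply hK.inter_right
        have : {x : ℕ → Bool | x j ≠ p j} = (fun x : ℕ → Bool => x j) ⁻¹' {p j}ᶜ := rfl
        rw [this]
        exact (isClosed_discrete _).preimage (continuous_apply j)
      · rintro x ⟨hxK, hxj⟩
        by_contra hninf
        rw [Set.not_infinite] at hninf
        exact hxj (congrFun (hPsub ⟨hxK, hninf⟩ hp) j)
    · intro f hf
      have hne : hmap f ≠ p := by
        intro he
        have := hmap_false_infinite f
        rw [he] at this
        exact this hp.2
      obtain ⟨j, hj⟩ := Function.ne_iff.mp hne
      exact mem_iUnion.mpr ⟨j, hf, hj⟩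

lemma frakB_set_nonempty : {c : Cardinal | ∃ S : Set (ℕ → ℕ), Cardinal.mk S = c ∧
    ¬ ∃ K : ℕ → Set (ℕ → ℕ), (∀ n, IsCompact (K n)) ∧ S ⊆ ⋃ n, K n}.Nonempty := by
  refine ⟨Cardinal.mk (univ : Set (ℕ → ℕ)), univ, rfl, ?_⟩
  rintro ⟨K, hKc, hKcover⟩
  have huniv : (⋃ n, K n) = univ := eq_univ_of_univ_subset hKcover
  obtain ⟨n, x, hx⟩ := nonempty_interior_of_iUnion_of_closed
    (fun n => (hKc n).isClosed) huniv
  obtain ⟨I, u, hu, hsub⟩ := isOpen_pi_iff.mp isOpen_interior x hx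
  set m := I.sup id + 1 with hm
  have hmI : m ∉ I := by
    intro h
    have := Finset.le_sup (f := id) h
    simp only [id] at this
    omega
  have hmem : ∀ j : ℕ, Function.update x m j ∈ K n := by
    intro j
    apply interior_subset
    apply hsub
    intro i hi
    rw [Function.update_of_ne (fun he : i = m => hmI (he ▸ hi))]
    exact (hu i hi).2
  have hcompact : IsCompact ((fun g : ℕ → ℕ => g m) '' K n) :=
    (hKc n).image (continuous_apply m)
  have hinf : ((fun g : ℕ → ℕ => g m) '' K n).Infinite := by
    apply Set.infinite_of_injective_forall_mem (f := fun j : ℕ => j) (fun a b h => h)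
    intro j
    exact ⟨Function.update x m j, hmem j, by simp⟩
  exact hinf hcompact.finite_of_discrete

theorem stmt_18 : kappa finDiffGraph ≤ frakB := by
  unfold frakB
  apply le_csInf frakB_set_nonempty
  rintro c ⟨S, hSc, hS⟩
  have hmem : Cardinal.mk ((fun f => hmap f) '' S : Set (ℕ → Bool)) ∈
      {c : Cardinal | ∃ S : Set (ℕ → Bool), Cardinal.mk S = c ∧
        ¬ ∃ K : ℕ → Set (ℕ → Bool),
          (∀ n, IsCompact (K n) ∧ Anticlique finDiffGraph (K n)) ∧ S ⊆ ⋃ n, K n} := by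
    refine ⟨_, rfl, ?_⟩
    rintro ⟨K, hK, hcover⟩
    apply hS
    choose D hDc hDcover using fun n => sigma_cover (hK n).1 (hK n).2
    let e : ℕ ≃ ℕ × ℕ := (Denumerable.eqv (ℕ × ℕ)).symm
    refine ⟨fun k => D (e k).1 (e k).2, fun k => hDc _ _, ?_⟩
    intro f hf
    have h1 : hmap f ∈ ⋃ n, K n := hcover ⟨f, hf, rfl⟩
    obtain ⟨n, hn⟩ := mem_iUnion.mp h1
    have h2 : f ∈ ⋃ j, D n j := hDcover n hn
    obtain ⟨j, hj⟩ := mem_iUnion.mp h2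
    refine mem_iUnion.mpr ⟨e.symm (n, j), ?_⟩
    simpa [e] using hj
  calc kappa finDiffGraph ≤ Cardinal.mk ((fun f => hmap f) '' S : Set (ℕ → Bool)) :=
        csInf_le (OrderBot.bddBelow _) hmem
    _ = c := by rw [Cardinal.mk_image_eq hmap_injective, hSc]
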